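/- Suppose D is a power of two large enough (depending only on α, d, 𝐝) that ‖Q‖_{Î} ≥ 10⁴ ‖Q‖_I for every D-adic cube I of negative scale and every Q ∈ 𝒬, and fix integers s_min ≤ s_max ≤ 0. Then there exist collections of pairs 𝔓_I, indexed by the D-adic cubes I ∈ 𝒟 with s_min ≤ s(I) ≤ s_max, where each pair 𝔭 ∈ 𝔓_I consists of the spatial cube I_𝔭 = I and a Borel set 𝒬(𝔭) ⊂ 𝒬, such that: (1) every 𝔭 ∈ 𝔓_I has a central polynomial Q_𝔭 ∈ 𝒬(𝔭) with B_I(Q_𝔭, 0.2) ⊂ 𝒬(𝔭) ⊂ B_I(Q_𝔭, 1); (2) for each such I the sets 𝒬(𝔭), 𝔭 ∈ 𝔓_I, form a disjoint cover of 𝒬; (3) if I ⊂ I', 𝔭 ∈ 𝔓_I and 𝔭' ∈ 𝔓_{I'}, then either 𝒬(𝔭) ∩ 𝒬(𝔭') = ∅ or 𝒬(𝔭') ⊂ 𝒬(𝔭). -/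

import Mathlib

/-!
The partitions are built from the top scale `s_max` downwards, each cube refining the partition
of its parent `Î`. The cells at `Î` have `‖·‖_Î`-radius at most `1`, hence `‖·‖_I`-radius at most
`10⁻⁴`. Take a maximal `0.6`-separated set of their centres and attach every cell to a centre
within `0.6`, to the unique one within `0.25` if there is one: the merged cells have radius
`≤ 10⁻⁴ + 0.6 ≤ 1` and contain the `0.2`-ball around their centre. Every cell at `I` is thus a
union of cells at `Î`, so by induction cells at nested cubes are nested or disjoint. At the top
scale one starts from the partition into singletons. If `D ^ αᵢ = 1` for all `i`, all cubes are
`[0,1)^𝐝` and the hypothesis on `D` forces `‖·‖_I = 0` on `𝒬`, so every cell is all of `𝒬`.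
-/

open MeasureTheory Set
open scoped ENNReal NNReal BigOperators

noncomputable section

/-- Anisotropic dilation `δ_r`. -/
def dil {dd : ℕ} (α : Fin dd → ℕ) (r : ℝ) (x : Fin dd → ℝ) : Fin dd → ℝ :=
  fun i => r ^ (α i) * x i

/-- An anisotropic `D`-adic cube, given by its scale `s` and position `k`. -/
structure DCube (dd : ℕ) where
  s : ℤ
  k : Fin dd → ℤ

/-- The cube `x + δ_{D^s}([0,1)^dd)` with `x = δ_{D^s}(k)`, as a subset of `ℝ^dd`. -/
def DCube.toSet {dd : ℕ} (α : Fin dd → ℕ) (D : ℕ) (J : DCube dd) : Set (Fin dd → ℝ) :=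
  {x | ∀ i, (D : ℝ) ^ (J.s * (α i : ℤ)) * J.k i ≤ x i ∧
            x i < (D : ℝ) ^ (J.s * (α i : ℤ)) * (J.k i + 1)}

/-- Membership in the grid `𝒟`: nonpositive scale and base point in `[0,1)^dd`. -/
def DCube.valid {dd : ℕ} (α : Fin dd → ℕ) (D : ℕ) (J : DCube dd) : Prop :=
  J.s ≤ 0 ∧ ∀ i, 0 ≤ J.k i ∧ (D : ℝ) ^ (J.s * (α i : ℤ)) * J.k i < 1

/-- The space `𝒬` of real polynomials of degree at most `d` without constant term. -/
def QSpace (dd d : ℕ) : Set (MvPolynomial (Fin dd) ℝ) :=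
  {Q | Q.totalDegree ≤ d ∧ MvPolynomial.coeff 0 Q = 0}

/-- `‖Q‖_I`. -/
def qnorm {dd : ℕ} (Q : MvPolynomial (Fin dd) ℝ) (I : Set (Fin dd → ℝ)) : ℝ :=
  ⨆ x ∈ I, ⨆ y ∈ I, |MvPolynomial.eval x Q - MvPolynomial.eval y Q|

/-- `B_I(Q, r)`. -/
def qball {dd : ℕ} (d : ℕ) (I : Set (Fin dd → ℝ)) (Q : MvPolynomial (Fin dd) ℝ) (r : ℝ) :
    Set (MvPolynomial (Fin dd) ℝ) :=
  {Q' ∈ QSpace dd d | qnorm (Q' - Q) I ≤ r}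

open MvPolynomial

section QNorm

variable {dd : ℕ} {I : Set (Fin dd → ℝ)} {Q : MvPolynomial (Fin dd) ℝ}

lemma qnorm_nonneg : 0 ≤ qnorm Q I :=
  Real.iSup_nonneg fun _ ↦ Real.iSup_nonneg fun _ ↦ Real.iSup_nonneg fun _ ↦
    Real.iSup_nonneg fun _ ↦ abs_nonneg _

lemma qnorm_le {M : ℝ} (hM : 0 ≤ M) (h : ∀ x ∈ I, ∀ y ∈ I, |eval x Q - eval y Q| ≤ M) :
    qnorm Q I ≤ M :=
  Real.iSup_le (fun x ↦ Real.iSup_le (fun hx ↦ Real.iSup_le (fun y ↦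
    Real.iSup_le (h x hx y) hM) hM) hM) hM

lemma abs_eval_sub_eval_le_qnorm (hI : Bornology.IsBounded I) {x y : Fin dd → ℝ} (hx : x ∈ I)
    (hy : y ∈ I) : |eval x Q - eval y Q| ≤ qnorm Q I := by
  obtain ⟨C, hC⟩ := (hI.prod hI).isCompact_closure.exists_bound_of_continuousOn
    (f := fun z : (Fin dd → ℝ) × (Fin dd → ℝ) ↦ |eval z.1 Q - eval z.2 Q|)
    ((Q.continuous_eval.comp continuous_fst).sub
      (Q.continuous_eval.comp continuous_snd)).abs.continuousOn
  have hbound : ∀ x ∈ I, ∀ y ∈ I, |eval x Q - eval y Q| ≤ C := fun x hx y hy ↦ by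
    simpa using hC (x, y) (subset_closure ⟨hx, hy⟩)
  have hC0 : 0 ≤ C := (abs_nonneg _).trans (hbound x hx x hx)
  have inner : ∀ x ∈ I, ∀ y, ⨆ (_ : y ∈ I), |eval x Q - eval y Q| ≤ C :=
    fun x hx y ↦ Real.iSup_le (hbound x hx y) hC0
  have outer : ∀ x, ⨆ (_ : x ∈ I), ⨆ y ∈ I, |eval x Q - eval y Q| ≤ C :=
    fun x ↦ Real.iSup_le (fun hx ↦ Real.iSup_le (inner x hx) hC0) hC0
  calc |eval x Q - eval y Q| = ⨆ (_ : y ∈ I), |eval x Q - eval y Q| :=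
        (ciSup_pos (f := fun _ ↦ |eval x Q - eval y Q|) hy).symm
    _ ≤ ⨆ y ∈ I, |eval x Q - eval y Q| := le_ciSup ⟨C, forall_mem_range.2 (inner x hx)⟩ y
    _ = ⨆ (_ : x ∈ I), ⨆ y ∈ I, |eval x Q - eval y Q| :=
      (ciSup_pos (f := fun _ ↦ ⨆ y ∈ I, |eval x Q - eval y Q|) hx).symm
    _ ≤ qnorm Q I := le_ciSup ⟨C, forall_mem_range.2 outer⟩ x

variable (I) in
def qnormSeminorm (hI : Bornology.IsBounded I) : AddGroupSeminorm (MvPolynomial (Fin dd) ℝ) where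
  toFun Q := qnorm Q I
  map_zero' := by simp [qnorm]
  add_le' A B := qnorm_le (add_nonneg qnorm_nonneg qnorm_nonneg) fun x hx y hy ↦
    calc |eval x (A + B) - eval y (A + B)| = |(eval x A - eval y A) + (eval x B - eval y B)| := by
          rw [map_add, map_add, add_sub_add_comm]
      _ ≤ qnorm A I + qnorm B I := (abs_add_le _ _).trans <|
          add_le_add (abs_eval_sub_eval_le_qnorm hI hx hy) (abs_eval_sub_eval_le_qnorm hI hx hy)
  neg' Q := iSup_congr fun x ↦ iSup_congr fun _ ↦ iSup_congr fun y ↦ iSup_congr fun _ ↦ by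
    rw [map_neg, map_neg, neg_sub_neg, abs_sub_comm]

@[simp]
lemma qnormSeminorm_apply (hI : Bornology.IsBounded I) : qnormSeminorm I hI Q = qnorm Q I := rfl

end QNorm

lemma QSpace.sub_mem {dd d : ℕ} {A B : MvPolynomial (Fin dd) ℝ} (hA : A ∈ QSpace dd d)
    (hB : B ∈ QSpace dd d) : A - B ∈ QSpace dd d :=
  ⟨(totalDegree_sub A B).trans (max_le hA.1 hB.1), by simp [hA.2, hB.2]⟩

namespace DCube

variable {dd : ℕ} {α : Fin dd → ℕ} {D : ℕ}

def ancestor (α : Fin dd → ℕ) (D : ℕ) (J : DCube dd) (n : ℕ) : DCube dd :=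
  ⟨J.s + n, fun i ↦ J.k i / (D : ℤ) ^ (n * α i)⟩

lemma toSet_eq_pi (J : DCube dd) : J.toSet α D = univ.pi fun i ↦
    Ico ((D : ℝ) ^ (J.s * (α i : ℤ)) * J.k i) ((D : ℝ) ^ (J.s * (α i : ℤ)) * (J.k i + 1)) := by
  ext x
  simp [toSet]

lemma isBounded_toSet (J : DCube dd) : Bornology.IsBounded (J.toSet α D) :=
  (Metric.isBounded_Icc (fun i ↦ (D : ℝ) ^ (J.s * (α i : ℤ)) * J.k i)
    (fun i ↦ (D : ℝ) ^ (J.s * (α i : ℤ)) * (J.k i + 1))).subset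
    fun _ hx ↦ ⟨fun i ↦ (hx i).1, fun i ↦ (hx i).2.le⟩

lemma toSet_subset_toSet_iff (hD : 0 < D) {J J' : DCube dd} :
    J.toSet α D ⊆ J'.toSet α D ↔ ∀ i,
      (D : ℝ) ^ (J'.s * (α i : ℤ)) * J'.k i ≤ (D : ℝ) ^ (J.s * (α i : ℤ)) * J.k i ∧
      (D : ℝ) ^ (J.s * (α i : ℤ)) * (J.k i + 1) ≤ (D : ℝ) ^ (J'.s * (α i : ℤ)) * (J'.k i + 1) := by
  have hlt : ∀ i, (D : ℝ) ^ (J.s * (α i : ℤ)) * J.k i < (D : ℝ) ^ (J.s * (α i : ℤ)) * (J.k i + 1) :=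
    fun i ↦ mul_lt_mul_of_pos_left (lt_add_one _) (zpow_pos (by exact_mod_cast hD) _)
  rw [toSet_eq_pi, toSet_eq_pi, univ_pi_subset_univ_pi_iff,
    or_iff_left (by simp [Ico_eq_empty_iff, hlt])]
  exact forall_congr' fun i ↦ Ico_subset_Ico_iff (hlt i)

lemma toSet_subset_toSet_iff_eq_ancestor (hD : 0 < D) {J J' : DCube dd} {n : ℕ}
    (hs : J'.s = J.s + n) : J.toSet α D ⊆ J'.toSet α D ↔ J' = J.ancestor α D n := by
  have hk : J' = J.ancestor α D n ↔ ∀ i, J'.k i = J.k i / (D : ℤ) ^ (n * α i) := by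
    cases J'
    simp only at hs
    simp [ancestor, hs, _root_.funext_iff]
  rw [toSet_subset_toSet_iff hD, hk]
  refine forall_congr' fun i ↦ ?_
  set h := (D : ℝ) ^ (J.s * (α i : ℤ))
  set M : ℤ := (D : ℤ) ^ (n * α i)
  have hh : 0 < h := zpow_pos (by exact_mod_cast hD) _
  have hM : 0 < M := by positivity
  have hscale : (D : ℝ) ^ (J'.s * (α i : ℤ)) = h * M := by
    rw [hs, add_mul, zpow_add₀ (by positivity), ← Nat.cast_mul, zpow_natCast]
    push_cast [M, h]
    rfl
  rw [hscale, mul_assoc, mul_assoc, mul_le_mul_iff_of_pos_left hh, mul_le_mul_iff_of_pos_left hh]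
  have hdiv : J'.k i = J.k i / M ↔ J'.k i * M ≤ J.k i ∧ J.k i + 1 ≤ (J'.k i + 1) * M := by
    rw [← Int.le_ediv_iff_mul_le hM, Int.add_one_le_iff, ← Int.ediv_lt_iff_lt_mul hM]
    omega
  rw [hdiv, mul_comm (M : ℝ), mul_comm (M : ℝ)]
  norm_cast

lemma toSet_subset_ancestor (hD : 0 < D) (J : DCube dd) (n : ℕ) :
    J.toSet α D ⊆ (J.ancestor α D n).toSet α D :=
  (toSet_subset_toSet_iff_eq_ancestor hD rfl).2 rfl

lemma ancestor_zero (hD : 0 < D) (J : DCube dd) : J.ancestor α D 0 = J :=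
  ((toSet_subset_toSet_iff_eq_ancestor hD (by simp)).1 subset_rfl).symm

lemma ancestor_succ (hD : 0 < D) (J : DCube dd) (n : ℕ) :
    J.ancestor α D (n + 1) = (J.ancestor α D 1).ancestor α D n :=
  ((toSet_subset_toSet_iff_eq_ancestor (J' := (J.ancestor α D 1).ancestor α D n) hD
    (by simp [ancestor]; ring)).1
    ((J.toSet_subset_ancestor hD 1).trans (toSet_subset_ancestor hD _ n))).symm

lemma valid_ancestor (hD : 0 < D) {J : DCube dd} (hJ : J.valid α D) {n : ℕ} (hn : J.s + n ≤ 0) :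
    (J.ancestor α D n).valid α D :=
  ⟨hn, fun i ↦ ⟨Int.ediv_nonneg (hJ.2 i).1 (by positivity),
    ((toSet_subset_toSet_iff hD).1 (J.toSet_subset_ancestor hD n) i).1.trans_lt (hJ.2 i).2⟩⟩

lemma s_le_s_of_toSet_subset (hD : 0 < D) {i : Fin dd} (hi : 1 < (D : ℝ) ^ α i)
    {J J' : DCube dd} (h : J.toSet α D ⊆ J'.toSet α D) : J.s ≤ J'.s := by
  obtain ⟨hlow, hhigh⟩ := (toSet_subset_toSet_iff hD).1 h i
  have hside : (D : ℝ) ^ (J.s * (α i : ℤ)) ≤ (D : ℝ) ^ (J'.s * (α i : ℤ)) := by linarith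
  rwa [mul_comm J.s, mul_comm J'.s, zpow_mul, zpow_mul, zpow_natCast,
    zpow_le_zpow_iff_right₀ hi] at hside

lemma toSet_eq_of_pow_eq_one (h : ∀ i, (D : ℝ) ^ α i = 1) {J : DCube dd} (hJ : J.valid α D) :
    J.toSet α D = {x | ∀ i, 0 ≤ x i ∧ x i < 1} := by
  have hside : ∀ i, (D : ℝ) ^ (J.s * (α i : ℤ)) = 1 := fun i ↦ by
    rw [mul_comm, zpow_mul, zpow_natCast, h, one_zpow]
  have hk : ∀ i, J.k i = 0 := fun i ↦ by
    have hlt : J.k i < 1 := by exact_mod_cast (by simpa [hside] using (hJ.2 i).2 : (J.k i : ℝ) < 1)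
    have := (hJ.2 i).1
    omega
  ext x
  simp [toSet, hside, hk]

end DCube

section CenteredPartition

variable {X : Type*} {S : Set X} {P : Set (Set X × X)}

def IsCenteredPartition (S : Set X) (P : Set (Set X × X)) : Prop :=
  (∀ p ∈ P, p.2 ∈ p.1) ∧ (⋃ p ∈ P, p.1) = S ∧ P.PairwiseDisjoint Prod.fst

namespace IsCenteredPartition

lemma subset (hP : IsCenteredPartition S P) {p : Set X × X} (hp : p ∈ P) : p.1 ⊆ S :=
  hP.2.1 ▸ subset_biUnion_of_mem (u := Prod.fst) hp

lemma exists_mem (hP : IsCenteredPartition S P) {y : X} (hy : y ∈ S) : ∃ p ∈ P, y ∈ p.1 := by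
  rw [← hP.2.1] at hy
  simpa using hy

lemma eq_of_mem (hP : IsCenteredPartition S P) {p q : Set X × X} (hp : p ∈ P) (hq : q ∈ P)
    {y : X} (hyp : y ∈ p.1) (hyq : y ∈ q.1) : p = q :=
  hP.2.2.elim hp hq (not_disjoint_iff.2 ⟨y, hyp, hyq⟩)

lemma disjoint_or_subset (hP : IsCenteredPartition S P) {p q : Set X × X} (hp : p ∈ P)
    (hq : q ∈ P) {A : Set X} (hA : A ⊆ q.1) : Disjoint p.1 A ∨ A ⊆ p.1 := by
  rcases eq_or_ne p q with rfl | hne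
  · exact Or.inr hA
  · exact Or.inl ((hP.2.2 hp hq hne).mono_right hA)

end IsCenteredPartition

lemma isCenteredPartition_singletons (S : Set X) :
    IsCenteredPartition S ((fun x ↦ ({x}, x)) '' S) := by
  refine ⟨by simp, by ext; simp, ?_⟩
  rintro _ ⟨x, -, rfl⟩ _ ⟨y, -, rfl⟩ hne
  exact disjoint_singleton.2 fun h ↦ hne (h ▸ rfl)

lemma exists_pairwise_subset_forall_exists_not_rel {r : X → X → Prop} (hr : ∀ x y, r x y → r y x)
    (hirr : ∀ x, ¬ r x x) (C : Set X) : ∃ Z ⊆ C, Z.Pairwise r ∧ ∀ c ∈ C, ∃ z ∈ Z, ¬ r c z := by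
  obtain ⟨Z, hZ⟩ := zorn_subset {Z | Z ⊆ C ∧ Z.Pairwise r} fun c hc hchain ↦
    ⟨⋃₀ c, ⟨sUnion_subset fun Z hZ ↦ (hc hZ).1, hchain.pairwise_sUnion.2 fun Z hZ ↦ (hc hZ).2⟩,
      fun _ ↦ subset_sUnion_of_mem⟩
  refine ⟨Z, hZ.prop.1, hZ.prop.2, fun c hc ↦ ?_⟩
  by_contra! hfar
  have hcZ : c ∈ Z := hZ.mem_of_prop_insert ⟨insert_subset hc hZ.prop.1,
    hZ.prop.2.insert fun z hz _ ↦ ⟨hfar z hz, hr _ _ (hfar z hz)⟩⟩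
  exact hirr c (hfar c hcZ)

end CenteredPartition

section BallPartition

variable {G : Type*} [AddGroup G] (S : Set G) (N : AddGroupSeminorm G)

def IsBallPartition (P : Set (Set G × G)) : Prop :=
  IsCenteredPartition S P ∧
    ∀ p ∈ P, {y ∈ S | N (y - p.2) ≤ 0.2} ⊆ p.1 ∧ p.1 ⊆ {y ∈ S | N (y - p.2) ≤ 1}

lemma exists_separated_subset_nearest (C : Set G) :
    ∃ Z ⊆ C, ∃ φ : G → G, ∀ c ∈ C,
      φ c ∈ Z ∧ N (c - φ c) ≤ 0.6 ∧ ∀ z ∈ Z, N (c - z) ≤ 0.25 → φ c = z := by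
  obtain ⟨Z, hZC, hsep, hcov⟩ := exists_pairwise_subset_forall_exists_not_rel
    (r := fun z z' ↦ 0.6 < N (z - z')) (fun z z' h ↦ by rwa [map_sub_rev N z']) (by norm_num) C
  have hφ : ∀ c ∈ C, ∃ z ∈ Z, N (c - z) ≤ 0.6 ∧ ∀ z' ∈ Z, N (c - z') ≤ 0.25 → z = z' := by
    intro c hc
    by_cases hnear : ∃ z ∈ Z, N (c - z) ≤ 0.25
    · obtain ⟨z, hz, hcz⟩ := hnear
      refine ⟨z, hz, hcz.trans (by norm_num), fun z' hz' hcz' ↦ ?_⟩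
      by_contra hne
      have htri := le_map_sub_add_map_sub N z c z'
      rw [map_sub_rev N z c] at htri
      linarith [hsep hz hz' hne]
    · push Not at hnear
      obtain ⟨z, hz, hcz⟩ := hcov c hc
      exact ⟨z, hz, not_lt.1 hcz, fun z' hz' hcz' ↦ absurd hcz' (hnear z' hz').not_ge⟩
  choose! φ hφ using hφ
  exact ⟨Z, hZC, φ, hφ⟩

theorem IsCenteredPartition.exists_isBallPartition_coarsening {P₀ : Set (Set G × G)}
    (hP₀ : IsCenteredPartition S P₀) (hsmall : ∀ p ∈ P₀, ∀ y ∈ p.1, N (y - p.2) ≤ 1 / 20) :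
    ∃ P, IsBallPartition S N P ∧ ∀ p₀ ∈ P₀, ∃ p ∈ P, p₀.1 ⊆ p.1 := by
  obtain ⟨Z, hZ, φ, hφ⟩ := exists_separated_subset_nearest N (Prod.snd '' P₀)
  have hφZ : ∀ p ∈ P₀, φ p.2 ∈ Z := fun p hp ↦ (hφ _ (mem_image_of_mem _ hp)).1
  set cell : G → Set G := fun z ↦ {y | ∃ p ∈ P₀, φ p.2 = z ∧ y ∈ p.1}
  refine ⟨(fun z ↦ (cell z, z)) '' Z, ⟨⟨?_, ?_, ?_⟩, ?_⟩,
    fun p hp ↦ ⟨_, mem_image_of_mem _ (hφZ p hp), fun y hy ↦ ⟨p, hp, rfl, hy⟩⟩⟩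
  · rintro _ ⟨z, hz, rfl⟩
    obtain ⟨p, hp, rfl⟩ := hZ hz
    exact ⟨p, hp, (hφ _ ⟨p, hp, rfl⟩).2.2 _ hz (by norm_num), hP₀.1 p hp⟩
  · ext y
    simp only [mem_iUnion, exists_prop, mem_image]
    constructor
    · rintro ⟨_, ⟨z, -, rfl⟩, p, hp, -, hyp⟩
      exact hP₀.subset hp hyp
    · intro hy
      obtain ⟨p, hp, hyp⟩ := hP₀.exists_mem hy
      exact ⟨_, ⟨_, hφZ p hp, rfl⟩, p, hp, rfl, hyp⟩
  · rintro _ ⟨z, -, rfl⟩ _ ⟨z', -, rfl⟩ hne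
    refine Set.disjoint_left.2 ?_
    rintro y ⟨p, hp, rfl, hyp⟩ ⟨p', hp', rfl, hyp'⟩
    exact hne (by rw [hP₀.eq_of_mem hp hp' hyp hyp'])
  · rintro _ ⟨z, hz, rfl⟩
    refine ⟨fun y ⟨hyS, hyz⟩ ↦ ?_, ?_⟩
    · obtain ⟨p, hp, hyp⟩ := hP₀.exists_mem hyS
      refine ⟨p, hp, (hφ _ ⟨p, hp, rfl⟩).2.2 z hz ?_, hyp⟩
      calc N (p.2 - z) ≤ N (p.2 - y) + N (y - z) := le_map_sub_add_map_sub N _ _ _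
        _ ≤ 1 / 20 + 0.2 := by rw [map_sub_rev]; exact add_le_add (hsmall p hp y hyp) hyz
        _ ≤ 0.25 := by norm_num
    · rintro y ⟨p, hp, rfl, hyp⟩
      refine ⟨hP₀.subset hp hyp, ?_⟩
      calc N (y - φ p.2) ≤ N (y - p.2) + N (p.2 - φ p.2) := le_map_sub_add_map_sub N _ _ _
        _ ≤ 1 / 20 + 0.6 := add_le_add (hsmall p hp y hyp) (hφ _ ⟨p, hp, rfl⟩).2.1
        _ ≤ 1 := by norm_num

def coarsening (P₀ : Set (Set G × G)) : Set (Set G × G) :=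
  Classical.epsilon fun P ↦ IsBallPartition S N P ∧ ∀ p₀ ∈ P₀, ∃ p ∈ P, p₀.1 ⊆ p.1

variable {S N} in
lemma IsCenteredPartition.coarsening_spec {P₀ : Set (Set G × G)}
    (hP₀ : IsCenteredPartition S P₀) (hsmall : ∀ p ∈ P₀, ∀ y ∈ p.1, N (y - p.2) ≤ 1 / 20) :
    IsBallPartition S N (coarsening S N P₀) ∧ ∀ p₀ ∈ P₀, ∃ p ∈ coarsening S N P₀, p₀.1 ⊆ p.1 :=
  Classical.epsilon_spec (hP₀.exists_isBallPartition_coarsening S N hsmall)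

end BallPartition

section CubePartition

variable {dd : ℕ} (α : Fin dd → ℕ) (D d : ℕ)

def DCube.qnormSeminorm (J : DCube dd) : AddGroupSeminorm (MvPolynomial (Fin dd) ℝ) :=
  _root_.qnormSeminorm (J.toSet α D) J.isBounded_toSet

def cubePartition :
    ℕ → DCube dd → Set (Set (MvPolynomial (Fin dd) ℝ) × MvPolynomial (Fin dd) ℝ)
  | 0, J => coarsening (QSpace dd d) (J.qnormSeminorm α D) ((fun Q ↦ ({Q}, Q)) '' QSpace dd d)
  | n + 1, J => coarsening (QSpace dd d) (J.qnormSeminorm α D) (cubePartition n (J.ancestor α D 1))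

variable {α D d}
  (hcontr : ∀ J : DCube dd, J.valid α D → J.s < 0 → ∀ Q ∈ QSpace dd d,
    10 ^ 4 * qnorm Q (J.toSet α D) ≤ qnorm Q ((J.ancestor α D 1).toSet α D))
include hcontr

lemma cubePartition_succ_spec {J : DCube dd} (hJ : J.valid α D) (hs : J.s < 0) {n : ℕ}
    (hparent : IsBallPartition (QSpace dd d) ((J.ancestor α D 1).qnormSeminorm α D)
      (cubePartition α D d n (J.ancestor α D 1))) :
    IsBallPartition (QSpace dd d) (J.qnormSeminorm α D) (cubePartition α D d (n + 1) J) ∧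
      ∀ p₀ ∈ cubePartition α D d n (J.ancestor α D 1),
        ∃ p ∈ cubePartition α D d (n + 1) J, p₀.1 ⊆ p.1 := by
  refine hparent.1.coarsening_spec fun p hp y hy ↦ ?_
  obtain ⟨hyS, hy1⟩ := (hparent.2 p hp).2 hy
  have hcenter : p.2 ∈ QSpace dd d := hparent.1.subset hp (hparent.1.1 p hp)
  have := hcontr J hJ hs _ (QSpace.sub_mem hyS hcenter)
  simp only [DCube.qnormSeminorm, qnormSeminorm_apply] at hy1 ⊢
  linarith

lemma isBallPartition_cubePartition (hD : 0 < D) (n : ℕ) :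
    ∀ J : DCube dd, J.valid α D → J.s + n ≤ 0 →
      IsBallPartition (QSpace dd d) (J.qnormSeminorm α D) (cubePartition α D d n J) := by
  induction n with
  | zero =>
    intro J _ _
    refine ((isCenteredPartition_singletons _).coarsening_spec ?_).1
    rintro _ ⟨Q, -, rfl⟩ y rfl
    simp
  | succ n ih =>
    intro J hJ hn
    exact (cubePartition_succ_spec hcontr hJ (by omega)
      (ih _ (J.valid_ancestor hD hJ (by omega)) (by simp [DCube.ancestor]; omega))).1

lemma cubePartition_refines_of_ancestor (hD : 0 < D) (n m : ℕ) :
    ∀ J : DCube dd, J.valid α D → J.s + (n + m) ≤ 0 →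
      ∀ p₀ ∈ cubePartition α D d n (J.ancestor α D m),
        ∃ p ∈ cubePartition α D d (n + m) J, p₀.1 ⊆ p.1 := by
  induction m with
  | zero =>
    intro J _ _ p₀ hp₀
    exact ⟨p₀, by rwa [DCube.ancestor_zero hD] at hp₀, subset_rfl⟩
  | succ m ih =>
    intro J hJ hnm p₀ hp₀
    rw [DCube.ancestor_succ hD] at hp₀
    have hparent_valid := J.valid_ancestor hD hJ (n := 1) (by omega)
    have hparent_s : (J.ancestor α D 1).s + (n + m) ≤ 0 := by simp [DCube.ancestor]; omega
    obtain ⟨q, hq, hp₀q⟩ := ih _ hparent_valid hparent_s p₀ hp₀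
    obtain ⟨p, hp, hqp⟩ := (cubePartition_succ_spec hcontr hJ (by omega)
      (isBallPartition_cubePartition hcontr hD _ _ hparent_valid hparent_s)).2 q hq
    exact ⟨p, hp, hp₀q.trans hqp⟩

lemma qnorm_nonpos_of_pow_eq_one (hdeg : ∀ i, (D : ℝ) ^ α i = 1) {J : DCube dd}
    (hJ : J.valid α D) {Q : MvPolynomial (Fin dd) ℝ} (hQ : Q ∈ QSpace dd d) :
    qnorm Q (J.toSet α D) ≤ 0 := by
  set J₀ : DCube dd := ⟨-1, 0⟩
  have hJ₀ : J₀.valid α D := ⟨by norm_num, fun i ↦ by simp [J₀]⟩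
  have hparent : (J₀.ancestor α D 1).valid α D := by simp [J₀, DCube.ancestor, DCube.valid]
  have := hcontr J₀ hJ₀ (by norm_num) Q hQ
  rw [DCube.toSet_eq_of_pow_eq_one hdeg hJ₀, DCube.toSet_eq_of_pow_eq_one hdeg hparent] at this
  rw [DCube.toSet_eq_of_pow_eq_one hdeg hJ]
  linarith

lemma cubePartition_disjoint_or_subset (hD : 0 < D) {I I' : DCube dd} (hI : I.valid α D)
    (hI' : I'.valid α D) {n n' : ℕ} (hscale : I'.s + n' = I.s + n) (htop : I.s + n ≤ 0)
    (hII' : I.toSet α D ⊆ I'.toSet α D)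
    {p p' : Set (MvPolynomial (Fin dd) ℝ) × MvPolynomial (Fin dd) ℝ}
    (hp : p ∈ cubePartition α D d n I) (hp' : p' ∈ cubePartition α D d n' I') :
    Disjoint p.1 p'.1 ∨ p'.1 ⊆ p.1 := by
  have hpart := isBallPartition_cubePartition hcontr hD n I hI htop
  have hp'S : p'.1 ⊆ QSpace dd d :=
    (isBallPartition_cubePartition hcontr hD n' I' hI' (by omega)).1.subset hp'
  by_cases hdeg : ∀ i, (D : ℝ) ^ α i = 1
  · have hcenter : p.2 ∈ QSpace dd d := hpart.1.subset hp (hpart.1.1 p hp)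
    refine Or.inr fun y hy ↦ (hpart.2 p hp).1 ⟨hp'S hy, ?_⟩
    exact (qnorm_nonpos_of_pow_eq_one hcontr hdeg hI
      (QSpace.sub_mem (hp'S hy) hcenter)).trans (by norm_num)
  · push Not at hdeg
    obtain ⟨i, hi⟩ := hdeg
    have hi : 1 < (D : ℝ) ^ α i := (one_le_pow₀ (by exact_mod_cast hD)).lt_of_ne' hi
    have hle := DCube.s_le_s_of_toSet_subset hD hi hII'
    have hI'eq : I' = I.ancestor α D (I'.s - I.s).toNat :=
      (DCube.toSet_subset_toSet_iff_eq_ancestor hD (by omega)).1 hII'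
    obtain ⟨q, hq, hp'q⟩ := cubePartition_refines_of_ancestor hcontr hD n' (I'.s - I.s).toNat
      I hI (by omega) p' (hI'eq ▸ hp')
    rw [show n' + (I'.s - I.s).toNat = n by omega] at hq
    exact hpart.1.disjoint_or_subset hp hq hp'q

end CubePartition

theorem statement8_general (dd d : ℕ) (α : Fin dd → ℕ)
    (D : ℕ) (hDpow : ∃ k : ℕ, D = 2 ^ k)
    (hD : ∀ (I Ihat : DCube dd), I.valid α D → Ihat.valid α D →
      I.s < 0 → Ihat.s = I.s + 1 → I.toSet α D ⊆ Ihat.toSet α D →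
      ∀ Q ∈ QSpace dd d, 10 ^ 4 * qnorm Q (I.toSet α D) ≤ qnorm Q (Ihat.toSet α D))
    (s_min s_max : ℤ) (h₂ : s_max ≤ 0) :
    ∃ 𝔓 : DCube dd → Set (Set (MvPolynomial (Fin dd) ℝ) × MvPolynomial (Fin dd) ℝ),
      ∀ I : DCube dd, I.valid α D → s_min ≤ I.s → I.s ≤ s_max →
        -- (1) central polynomials
        (∀ p ∈ 𝔓 I, p.2 ∈ p.1 ∧
            qball d (I.toSet α D) p.2 0.2 ⊆ p.1 ∧ p.1 ⊆ qball d (I.toSet α D) p.2 1) ∧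
        -- (2) the uncertainty regions form a disjoint cover of 𝒬
        (⋃ p ∈ 𝔓 I, p.1) = QSpace dd d ∧
        (∀ p ∈ 𝔓 I, ∀ p' ∈ 𝔓 I, p ≠ p' → p.1 ∩ p'.1 = ∅) ∧
        -- (3) nesting
        (∀ I' : DCube dd, I'.valid α D → s_min ≤ I'.s → I'.s ≤ s_max →
          I.toSet α D ⊆ I'.toSet α D →
          ∀ p ∈ 𝔓 I, ∀ p' ∈ 𝔓 I', p.1 ∩ p'.1 = ∅ ∨ p'.1 ⊆ p.1) := by
  have hD0 : 0 < D := by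
    obtain ⟨k, rfl⟩ := hDpow
    positivity
  have hcontr : ∀ J : DCube dd, J.valid α D → J.s < 0 → ∀ Q ∈ QSpace dd d,
      10 ^ 4 * qnorm Q (J.toSet α D) ≤ qnorm Q ((J.ancestor α D 1).toSet α D) :=
    fun J hJ hs ↦ hD J _ hJ (J.valid_ancestor hD0 hJ (by omega)) hs (by simp [DCube.ancestor])
      (J.toSet_subset_ancestor hD0 1)
  refine ⟨fun I ↦ cubePartition α D d (s_max - I.s).toNat I, fun I hI _ hImax ↦ ?_⟩
  obtain ⟨hpart, hball⟩ :=
    isBallPartition_cubePartition hcontr hD0 (s_max - I.s).toNat I hI (by omega)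
  refine ⟨fun p hp ↦ ⟨hpart.1 p hp, hball p hp⟩, hpart.2.1,
    fun p hp p' hp' hne ↦ (hpart.2.2 hp hp' hne).inter_eq,
    fun I' hI' _ hI'max hII' p hp p' hp' ↦ ?_⟩
  exact (cubePartition_disjoint_or_subset hcontr hD0 hI hI' (by omega) (by omega) hII' hp
    hp').imp_left Disjoint.inter_eq

theorem statement8 (dd d : ℕ) (α : Fin dd → ℕ) (hα : ∀ i, 0 < α i) (hmono : Monotone α)
    (D : ℕ) (hDpow : ∃ k : ℕ, D = 2 ^ k)
    (hD : ∀ (I Ihat : DCube dd), I.valid α D → Ihat.valid α D →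
      I.s < 0 → Ihat.s = I.s + 1 → I.toSet α D ⊆ Ihat.toSet α D →
      ∀ Q ∈ QSpace dd d, 10 ^ 4 * qnorm Q (I.toSet α D) ≤ qnorm Q (Ihat.toSet α D))
    (s_min s_max : ℤ) (h₁ : s_min ≤ s_max) (h₂ : s_max ≤ 0) :
    ∃ 𝔓 : DCube dd → Set (Set (MvPolynomial (Fin dd) ℝ) × MvPolynomial (Fin dd) ℝ),
      ∀ I : DCube dd, I.valid α D → s_min ≤ I.s → I.s ≤ s_max →
        -- (1) central polynomials
        (∀ p ∈ 𝔓 I, p.2 ∈ p.1 ∧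
            qball d (I.toSet α D) p.2 0.2 ⊆ p.1 ∧ p.1 ⊆ qball d (I.toSet α D) p.2 1) ∧
        -- (2) the uncertainty regions form a disjoint cover of 𝒬
        (⋃ p ∈ 𝔓 I, p.1) = QSpace dd d ∧
        (∀ p ∈ 𝔓 I, ∀ p' ∈ 𝔓 I, p ≠ p' → p.1 ∩ p'.1 = ∅) ∧
        -- (3) nesting
        (∀ I' : DCube dd, I'.valid α D → s_min ≤ I'.s → I'.s ≤ s_max →
          I.toSet α D ⊆ I'.toSet α D →
          ∀ p ∈ 𝔓 I, ∀ p' ∈ 𝔓 I', p.1 ∩ p'.1 = ∅ ∨ p'.1 ⊆ p.1) :=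
  statement8_general dd d α D hDpow hD s_min s_max h₂
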